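/- For every positive integer d, π(P_{d+1}, d) ≥ d!/(d+1)^{d−1}, where P_{d+1} is a perfect path in Q_d (a path of d+1 vertices whose endpoints are at Hamming distance d). -/

import Mathlib

open scoped Classical

/-- The automorphism of the `d`-cube `Q_d` (vertices: `Fin d → Bool`) determined by a
coordinate permutation `π` and a translation (coordinate complementation pattern) `b`.
Every automorphism of `Q_d` is of this form. -/
def cubeAuto {d : ℕ} (π : Equiv.Perm (Fin d)) (b : Fin d → Bool) (v : Fin d → Bool) :
    Fin d → Bool :=
  fun i => xor (v (π.symm i)) (b i)

/-- `K` is an exact copy of `H` in `Q_d`: some automorphism of `Q_d` maps `H` onto `K`. -/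
def ExactCopy {d : ℕ} (H K : Set (Fin d → Bool)) : Prop :=
  ∃ (π : Equiv.Perm (Fin d)) (b : Fin d → Bool), K = cubeAuto π b '' H

/-- The configuration in `Q_d` induced on the sub-`d`-cube of `Q_n` with varying
coordinate set `D` (with `D.card = d`) and fixed values `f` outside `D`, by a set
`S ⊆ V(Q_n)`: the varying coordinates are identified with `Fin d` in increasing order. -/
def subcubeConfig {n d : ℕ} (D : Finset (Fin n)) (hD : D.card = d)
    (f : Fin n → Bool) (S : Set (Fin n → Bool)) : Set (Fin d → Bool) :=
  {x | (fun i => if h : i ∈ D then x ((D.orderIsoOfFin hD).symm ⟨i, h⟩) else f i) ∈ S}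

/-- `G(H,d,n,S)`: the number of sub-`d`-cubes `R` of `Q_n` such that `S ∩ R` is an exact
copy of `H`.  A sub-`d`-cube is encoded as a pair `(D, f)` with `D.card = d` and `f`
normalized to be `false` on `D`; there are `C(n,d)·2^(n-d)` of them. -/
noncomputable def goodCount {d : ℕ} (H : Set (Fin d → Bool)) (n : ℕ)
    (S : Set (Fin n → Bool)) : ℕ :=
  ((Finset.univ : Finset (Finset (Fin n) × (Fin n → Bool))).filter
    (fun P => ∃ h : P.1.card = d,
      (∀ i ∈ P.1, P.2 i = false) ∧ ExactCopy H (subcubeConfig P.1 h P.2 S))).card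

/-- `ex(H,d,n)`: the maximum over `S ⊆ V(Q_n)` of the fraction of sub-`d`-cubes of `Q_n`
whose intersection with `S` is an exact copy of `H`. -/
noncomputable def exDensity {d : ℕ} (H : Set (Fin d → Bool)) (n : ℕ) : ℝ :=
  (((Finset.univ : Finset (Finset (Fin n → Bool))).sup
      (fun S => goodCount H n (S : Set (Fin n → Bool))) : ℕ) : ℝ) /
    ((n.choose d : ℝ) * 2 ^ (n - d))

/-- The perfect path `P_{d+1}` in `Q_d`: the `d+1` vertices
`∅, {1}, {1,2}, …, {1,…,d}`, whose endpoints are at Hamming distance `d`. -/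
def perfectPath (d : ℕ) : Set (Fin d → Bool) :=
  {v | ∃ k : ℕ, k ≤ d ∧ v = fun i : Fin d => decide ((i : ℕ) < k)}

/-!
Split the coordinates of `Q_n` into the `d + 1` residue classes modulo `d + 1` and let `S`
consist of the vertices whose vector of class parities lies on the perfect `(2d+2)`-cycle
`B ⊆ Q_{d+1}`. A sub-`d`-cube with one free coordinate in each of `d` distinct classes is mapped
by the parity map onto a translate of a facet of `Q_{d+1}`, and every translate of `B` meets
every facet of `Q_{d+1}` in a perfect path. There are `(d+1)⌊n/(d+1)⌋^d 2^(n-d)` such sub-cubes, a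
proportion tending to `d!/(d+1)^(d-1)`.

The limit exists because each sub-`d`-cube of `Q_{n+1}` lies in exactly `n + 1 - d` of the
`2(n+1)` facets of `Q_{n+1}`; averaging over the facets shows that the maximal density is
non-increasing in `n ≥ d`.
-/

open Finset

/-! ### Exact copies -/

theorem cubeAuto_cubeAuto {d : ℕ} (π σ : Equiv.Perm (Fin d)) (b c v : Fin d → Bool) :
    cubeAuto π b (cubeAuto σ c v) = cubeAuto (σ.trans π) (cubeAuto π b c) v := by
  funext i
  simp [cubeAuto]

theorem ExactCopy.image_cubeAuto {d : ℕ} {H K : Set (Fin d → Bool)} (h : ExactCopy H K)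
    (π : Equiv.Perm (Fin d)) (b : Fin d → Bool) : ExactCopy H (cubeAuto π b '' K) := by
  obtain ⟨σ, c, rfl⟩ := h
  exact ⟨σ.trans π, cubeAuto π b c, by simp only [Set.image_image, cubeAuto_cubeAuto]⟩

theorem ExactCopy.preimage_comp {d : ℕ} {H K : Set (Fin d → Bool)} (h : ExactCopy H K)
    {τ : Fin d → Fin d} (hτ : Function.Injective τ) : ExactCopy H {x | x ∘ τ ∈ K} := by
  let σ := Equiv.ofBijective τ (Finite.injective_iff_bijective.mp hτ)
  convert h.image_cubeAuto σ (fun _ => false) using 1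
  refine (congrFun (Set.image_eq_preimage_of_inverse (g := (· ∘ σ)) ?_ ?_) K).symm <;>
    intro x <;> funext i <;> simp [cubeAuto, σ, Equiv.ofBijective_apply_symm_apply]

theorem exactCopy_perfectPath_of_injective {d : ℕ} {r : Fin d → Fin d}
    (hr : Function.Injective r) (b : Fin d → Bool) :
    ExactCopy (perfectPath d) {x | ∃ k ≤ d, x = fun i => xor (decide ((r i : ℕ) < k)) (b i)} := by
  let σ := Equiv.ofBijective r (Finite.injective_iff_bijective.mp hr)
  refine ⟨σ.symm, b, Set.ext fun x => ?_⟩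
  simp only [perfectPath, Set.mem_image, Set.mem_ofPred_eq]
  constructor
  · rintro ⟨k, hk, rfl⟩
    exact ⟨_, ⟨k, hk, rfl⟩, funext fun i => by simp [cubeAuto, σ]⟩
  · rintro ⟨_, ⟨k, hk, rfl⟩, rfl⟩
    exact ⟨k, hk, funext fun i => by simp [cubeAuto, σ]⟩

/-! ### The perfect cycle and its facets -/

/-- The perfect `(2d+2)`-cycle `B` in `Q_{d+1}`: the initial segments `{0, …, k-1}` and their
complements (every `k ≥ d + 1` gives the full set). -/
def perfectCycle (d : ℕ) : Set (Fin (d + 1) → Bool) :=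
  {w | ∃ (k : ℕ) (s : Bool), w = fun q : Fin (d + 1) => xor (decide ((q : ℕ) < k)) s}

theorem val_succAbove {d : ℕ} (m : Fin (d + 1)) (i : Fin d) :
    (m.succAbove i : ℕ) = if (i : ℕ) < m then (i : ℕ) else (i : ℕ) + 1 := by
  unfold Fin.succAbove
  split_ifs <;> simp_all [Fin.lt_def]

/- Along the part of `B` seen from the facet opposite `m`, the coordinates are flipped in the
cyclic order `m + 1, …, d, 0, …, m - 1`: coordinate `i` of the facet is flipped at step
`facetRank m i`, and the vertex with cycle parameter `k` is the `facetShift d m k`-th one. -/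

def facetRank {d : ℕ} (m : Fin (d + 1)) (i : Fin d) : Fin d :=
  ⟨if (m : ℕ) ≤ i then i - m else i + d - m, by
    have := i.isLt; have := m.isLt; split_ifs <;> omega⟩

def facetShift (d m k : ℕ) : ℕ := if k ≤ m then k + d - m else min k (d + 1) - m - 1

theorem facetRank_injective {d : ℕ} (m : Fin (d + 1)) : Function.Injective (facetRank m) := by
  intro i j h
  have := congrArg Fin.val h
  simp only [facetRank] at this
  ext
  split_ifs at this <;> omega

theorem facetShift_le (d m k : ℕ) : facetShift d m k ≤ d := by
  unfold facetShift; split_ifs <;> omega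

theorem exists_facetShift_eq {d k' : ℕ} (m : Fin (d + 1)) (hk' : k' ≤ d) :
    ∃ k, facetShift d m k = k' :=
  ⟨if k' ≤ d - m then k' + m + 1 else k' + m - d, by
    have := m.isLt; unfold facetShift; split_ifs <;> omega⟩

theorem decide_facetRank_lt_facetShift {d : ℕ} (m : Fin (d + 1)) (i : Fin d) (k : ℕ) :
    decide ((facetRank m i : ℕ) < facetShift d m k) =
      xor (xor (decide ((m.succAbove i : ℕ) < k)) (decide ((m : ℕ) < k)))
        (decide ((m : ℕ) ≤ i)) := by
  have := i.isLt; have := m.isLt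
  rw [val_succAbove]
  simp only [facetRank, facetShift]
  by_cases h1 : (m : ℕ) ≤ i <;> by_cases h2 : (m : ℕ) < k <;>
    simp [h1, h2, show (i : ℕ) < m ↔ ¬ (m : ℕ) ≤ i from Nat.not_le.symm, ← decide_not] <;>
    split_ifs <;> omega

theorem exactCopy_perfectPath_facet {d : ℕ} (m : Fin (d + 1)) (c : Fin (d + 1) → Bool) :
    ExactCopy (perfectPath d)
      {y | (fun q => xor (Fin.insertNth (α := fun _ => Bool) m false y q) (c q)) ∈
        perfectCycle d} := by
  convert exactCopy_perfectPath_of_injective (facetRank_injective m)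
    (fun i => xor (xor (c m) (c (m.succAbove i))) (decide ((m : ℕ) ≤ i))) using 1
  ext y
  simp only [perfectCycle, Set.mem_ofPred_eq, funext_iff]
  constructor
  · rintro ⟨k, s, hks⟩
    refine ⟨facetShift d m k, facetShift_le d m k, fun i => ?_⟩
    have hm := hks m
    have hi := hks (m.succAbove i)
    simp only [Fin.insertNth_apply_same, Fin.insertNth_apply_succAbove] at hm hi
    have hs : s = xor (decide ((m : ℕ) < k)) (c m) := by rw [Bool.false_xor] at hm; simp [hm]
    rw [decide_facetRank_lt_facetShift, ← Bool.xor_left_inj (z := c (m.succAbove i)), hi, hs]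
    simp [Bool.xor_comm, Bool.xor_left_comm]
  · rintro ⟨k', hk', hy⟩
    obtain ⟨k, rfl⟩ := exists_facetShift_eq m hk'
    refine ⟨k, xor (decide ((m : ℕ) < k)) (c m), fun q => ?_⟩
    rcases Fin.eq_self_or_eq_succAbove m q with rfl | ⟨i, rfl⟩
    · simp
    · simp only [Fin.insertNth_apply_succAbove, hy, decide_facetRank_lt_facetShift]
      simp [Bool.xor_comm, Bool.xor_left_comm]

/-! ### The blow-up of the perfect cycle -/

def blockOf (d : ℕ) {n : ℕ} (i : Fin n) : Fin (d + 1) := ⟨i % (d + 1), Nat.mod_lt _ d.succ_pos⟩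

def parityPattern (d : ℕ) {n : ℕ} (v : Fin n → Bool) (q : Fin (d + 1)) : Bool :=
  decide (Odd #{i | blockOf d i = q ∧ v i = true})

def blowUp (d n : ℕ) : Set (Fin n → Bool) := {v | parityPattern d v ∈ perfectCycle d}

/-- The free coordinates of a sub-cube meeting every block except `m` once: the `j`-th one is
the `t j`-th element of block `m.succAbove j`. -/
def transversal {d n : ℕ} (m : Fin (d + 1)) (t : Fin d → Fin (n / (d + 1))) (j : Fin d) :
    Fin n :=
  ⟨(d + 1) * t j + m.succAbove j, by
    have h := (Nat.mul_le_mul_left (d + 1) (t j).isLt).trans (Nat.mul_div_le n (d + 1))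
    have := (m.succAbove j).isLt
    rw [Nat.mul_succ] at h
    omega⟩

theorem blockOf_transversal {d n : ℕ} (m : Fin (d + 1)) (t : Fin d → Fin (n / (d + 1)))
    (j : Fin d) : blockOf d (transversal m t j) = m.succAbove j :=
  Fin.ext <| by simp [blockOf, transversal, Fin.is_le]

theorem transversal_div {d n : ℕ} (m : Fin (d + 1)) (t : Fin d → Fin (n / (d + 1)))
    (j : Fin d) : (transversal m t j : ℕ) / (d + 1) = t j := by
  simp [transversal, Nat.mul_add_div, Fin.is_le]

theorem transversal_injective {d n : ℕ} (m : Fin (d + 1)) (t : Fin d → Fin (n / (d + 1))) :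
    Function.Injective (transversal m t) := fun j j' h =>
  Fin.succAbove_right_injective <| by rw [← blockOf_transversal, h, blockOf_transversal]

def transversalSet {d n : ℕ} (m : Fin (d + 1)) (t : Fin d → Fin (n / (d + 1))) :
    Finset (Fin n) :=
  univ.image (transversal m t)

theorem card_transversalSet {d n : ℕ} (m : Fin (d + 1)) (t : Fin d → Fin (n / (d + 1))) :
    #(transversalSet m t) = d := by
  rw [transversalSet, card_image_of_injective _ (transversal_injective m t), card_univ,
    Fintype.card_fin]

theorem transversalSet_injective (d n : ℕ) :
    Function.Injective fun p : Fin (d + 1) × (Fin d → Fin (n / (d + 1))) =>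
      transversalSet p.1 p.2 := by
  have key : ∀ {m m' : Fin (d + 1)} {t t' : Fin d → Fin (n / (d + 1))} (j : Fin d),
      transversalSet m t = transversalSet m' t' →
        ∃ j', m.succAbove j = m'.succAbove j' ∧ t j = t' j' := by
    intro m m' t t' j h
    have hj : transversal m t j ∈ transversalSet m' t' := h ▸ mem_image_of_mem _ (mem_univ j)
    obtain ⟨j', -, hj'⟩ := mem_image.mp hj
    refine ⟨j', ?_, ?_⟩
    · rw [← blockOf_transversal, ← hj', blockOf_transversal]
    · rw [Fin.ext_iff, ← transversal_div, ← hj', transversal_div]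
  rintro ⟨m, t⟩ ⟨m', t'⟩ h
  have hm : m = m' := by
    by_contra hne
    obtain ⟨j, hj⟩ := Fin.exists_succAbove_eq hne
    obtain ⟨j', hj', -⟩ := key j h.symm
    exact Fin.succAbove_ne m j' (hj.symm.trans hj').symm
  subst hm
  refine Prod.ext rfl (funext fun j => ?_)
  obtain ⟨j', hj', htj⟩ := key j h
  rwa [← Fin.succAbove_right_injective hj'] at htj

theorem decide_odd_card_union {α : Type*} [DecidableEq α] {s t : Finset α} (h : Disjoint s t) :
    decide (Odd #(s ∪ t)) = xor (decide (Odd #s)) (decide (Odd #t)) := by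
  rw [card_union_of_disjoint h]
  by_cases hs : Odd #s <;> by_cases ht : Odd #t <;>
    simp [Nat.odd_add, hs, ht, ← Nat.not_odd_iff_even]

theorem decide_odd_card_succAbove_eq {d : ℕ} (m : Fin (d + 1)) (y : Fin d → Bool)
    (q : Fin (d + 1)) :
    decide (Odd #{j | m.succAbove j = q ∧ y j = true}) =
      Fin.insertNth (α := fun _ => Bool) m false y q := by
  rcases Fin.eq_self_or_eq_succAbove m q with rfl | ⟨j, rfl⟩
  · simp [Fin.succAbove_ne]
  · cases h : y j <;> simp [filter_and, filter_eq', h]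

theorem parityPattern_embed {d n : ℕ} (D : Finset (Fin n)) (hD : #D = d) {f : Fin n → Bool}
    (hf : ∀ i ∈ D, f i = false) (x : Fin d → Bool) :
    parityPattern d (fun i => if h : i ∈ D then x ((D.orderIsoOfFin hD).symm ⟨i, h⟩) else f i) =
      fun q => xor (decide (Odd #{k | blockOf d (D.orderEmbOfFin hD k) = q ∧ x k = true}))
        (parityPattern d f q) := by
  funext q
  set e := D.orderEmbOfFin hD
  have hsplit : ({i | blockOf d i = q ∧
      (if h : i ∈ D then x ((D.orderIsoOfFin hD).symm ⟨i, h⟩) else f i) = true} :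
        Finset (Fin n)) =
      ({k | blockOf d (e k) = q ∧ x k = true} : Finset (Fin d)).map e.toEmbedding ∪
        ({i | blockOf d i = q ∧ f i = true} : Finset (Fin n)) := by
    ext i
    simp only [mem_filter, mem_univ, true_and, mem_union, mem_map]
    by_cases hi : i ∈ D
    · obtain ⟨k, rfl⟩ : ∃ k, e k = i := by
        rw [← Set.mem_range, range_orderEmbOfFin]; exact hi
      have hk : (D.orderIsoOfFin hD).symm ⟨e k, hi⟩ = k :=
        (OrderIso.symm_apply_eq _).2 (Subtype.ext (coe_orderIsoOfFin_apply ..).symm)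
      simp [hi, hf _ hi, hk]
    · have : ∀ k, e k ≠ i := fun k hk => hi (hk ▸ orderEmbOfFin_mem D hD k)
      simp [hi, this]
  rw [parityPattern, hsplit, decide_odd_card_union, card_map]
  · rfl
  · rw [disjoint_left]
    intro _ hi hfi
    obtain ⟨k, -, rfl⟩ := mem_map.mp hi
    simp [e, hf _ (orderEmbOfFin_mem D hD k)] at hfi

theorem exactCopy_subcubeConfig_blowUp {d n : ℕ} (m : Fin (d + 1))
    (t : Fin d → Fin (n / (d + 1))) {f : Fin n → Bool}
    (hf : ∀ i ∈ transversalSet m t, f i = false) :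
    ExactCopy (perfectPath d)
      (subcubeConfig (transversalSet m t) (card_transversalSet m t) f (blowUp d n)) := by
  have hD := card_transversalSet m t
  have hmem : ∀ j, transversal m t j ∈ transversalSet m t := fun j =>
    mem_image_of_mem _ (mem_univ j)
  let τ : Fin d → Fin d := fun j => ((transversalSet m t).orderIsoOfFin hD).symm ⟨_, hmem j⟩
  have heτ : ∀ j, (transversalSet m t).orderEmbOfFin hD (τ j) = transversal m t j := fun j => by
    simp [τ, ← coe_orderIsoOfFin_apply]
  have hτ : Function.Injective τ := fun j j' h =>
    transversal_injective m t (by rw [← heτ, h, heτ])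
  let σ := Equiv.ofBijective τ (Finite.injective_iff_bijective.mp hτ)
  convert (exactCopy_perfectPath_facet m (parityPattern d f)).preimage_comp hτ using 1
  ext x
  simp only [subcubeConfig, blowUp, Set.mem_ofPred_eq, parityPattern_embed _ hD hf,
    ← decide_odd_card_succAbove_eq, Function.comp_apply]
  congr! 5 with q
  rw [card_filter, card_filter, ← σ.sum_comp]
  simp [σ, heτ, blockOf_transversal]

/-! ### Counting good sub-cubes -/

theorem card_filter_forall_mem_eq_false {n : ℕ} (D : Finset (Fin n)) :
    #{f : Fin n → Bool | ∀ i ∈ D, f i = false} = 2 ^ (n - #D) := by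
  have : ({f : Fin n → Bool | ∀ i ∈ D, f i = false} : Finset _) =
      Fintype.piFinset fun i => if i ∈ D then {false} else univ := by
    ext f
    simp only [mem_filter, mem_univ, true_and, Fintype.mem_piFinset]
    refine forall_congr' fun i => ?_
    split_ifs with hi <;> simp [hi]
  rw [this, Fintype.card_piFinset]
  simp [apply_ite, prod_ite, filter_not, card_sdiff]

noncomputable def goodSubcubes {d : ℕ} (H : Set (Fin d → Bool)) (n : ℕ)
    (S : Set (Fin n → Bool)) : Finset (Finset (Fin n) × (Fin n → Bool)) :=
  {P | ∃ h : #P.1 = d, (∀ i ∈ P.1, P.2 i = false) ∧ ExactCopy H (subcubeConfig P.1 h P.2 S)}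

theorem goodCount_eq_card_goodSubcubes {d : ℕ} (H : Set (Fin d → Bool)) (n : ℕ)
    (S : Set (Fin n → Bool)) : goodCount H n S = #(goodSubcubes H n S) := rfl

theorem goodCount_blowUp_ge (d n : ℕ) :
    (d + 1) * (n / (d + 1)) ^ d * 2 ^ (n - d) ≤ goodCount (perfectPath d) n (blowUp d n) := by
  let s := (univ : Finset (Fin (d + 1) × (Fin d → Fin (n / (d + 1))))).sigma fun p =>
    ({f | ∀ i ∈ transversalSet p.1 p.2, f i = false} : Finset (Fin n → Bool))
  have hs : #s = (d + 1) * (n / (d + 1)) ^ d * 2 ^ (n - d) := by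
    simp [s, card_sigma, card_filter_forall_mem_eq_false, card_transversalSet]
  rw [← hs, goodCount_eq_card_goodSubcubes]
  refine card_le_card_of_injOn (fun x => (transversalSet x.1.1 x.1.2, x.2)) ?_ ?_
  · rintro ⟨⟨m, t⟩, f⟩ hx
    replace hx := (mem_filter.mp (mem_sigma.mp hx).2).2
    exact mem_filter.2
      ⟨mem_univ _, card_transversalSet m t, hx, exactCopy_subcubeConfig_blowUp m t hx⟩
  · rintro ⟨p, f⟩ - ⟨p', f'⟩ - h
    obtain ⟨hp, rfl⟩ := Prod.ext_iff.mp h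
    cases transversalSet_injective d n hp
    rfl

/-! ### Facets of the cube and monotonicity of the density -/

def cubeSlice {n : ℕ} (S : Set (Fin (n + 1) → Bool)) (j : Fin (n + 1)) (b : Bool) :
    Set (Fin n → Bool) :=
  {y | Fin.insertNth j b y ∈ S}

noncomputable def sliceCoords {n : ℕ} (j : Fin (n + 1)) (D : Finset (Fin (n + 1))) :
    Finset (Fin n) :=
  {k | j.succAbove k ∈ D}

theorem map_sliceCoords {n : ℕ} {j : Fin (n + 1)} {D : Finset (Fin (n + 1))} (hj : j ∉ D) :
    (sliceCoords j D).map (Fin.succAboveEmb j) = D := by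
  ext i
  rcases Fin.eq_self_or_eq_succAbove j i with rfl | ⟨k, rfl⟩
  · simp [sliceCoords, hj, Fin.succAbove_ne]
  · simp [sliceCoords]

theorem card_sliceCoords {n : ℕ} {j : Fin (n + 1)} {D : Finset (Fin (n + 1))} (hj : j ∉ D) :
    #(sliceCoords j D) = #D := by
  rw [← card_map (Fin.succAboveEmb j), map_sliceCoords hj]

theorem orderEmbOfFin_eq_succAbove_sliceCoords {n d : ℕ} {j : Fin (n + 1)}
    {D : Finset (Fin (n + 1))} (hj : j ∉ D) (hD : #D = d) (k : Fin d) :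
    D.orderEmbOfFin hD k =
      j.succAbove ((sliceCoords j D).orderEmbOfFin ((card_sliceCoords hj).trans hD) k) := by
  refine (congrFun (orderEmbOfFin_unique hD (fun k => ?_)
    ((Fin.strictMono_succAbove j).comp (orderEmbOfFin _ _).strictMono)) k).symm
  exact (mem_filter.mp (orderEmbOfFin_mem (sliceCoords j D) _ k)).2

theorem subcubeConfig_eq_cubeSlice {n d : ℕ} (S : Set (Fin (n + 1) → Bool)) {j : Fin (n + 1)}
    {D : Finset (Fin (n + 1))} (hj : j ∉ D) (hD : #D = d) (f : Fin (n + 1) → Bool) :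
    subcubeConfig D hD f S =
      subcubeConfig (sliceCoords j D) ((card_sliceCoords hj).trans hD) (j.removeNth f)
        (cubeSlice S j (f j)) := by
  ext x
  simp only [subcubeConfig, cubeSlice, Set.mem_ofPred_eq]
  congr! 1
  funext i
  rcases Fin.eq_self_or_eq_succAbove j i with rfl | ⟨k, rfl⟩
  · simp [hj]
  · have hk : k ∈ sliceCoords j D ↔ j.succAbove k ∈ D := by simp [sliceCoords]
    rw [Fin.insertNth_apply_succAbove]
    by_cases hkD : j.succAbove k ∈ D
    · rw [dif_pos hkD, dif_pos (hk.2 hkD)]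
      congr 1
      rw [OrderIso.symm_apply_eq, Subtype.ext_iff, coe_orderIsoOfFin_apply,
        orderEmbOfFin_eq_succAbove_sliceCoords hj, ← coe_orderIsoOfFin_apply,
        OrderIso.apply_symm_apply]
    · rw [dif_neg hkD, dif_neg (mt hk.1 hkD), Fin.removeNth_apply]

theorem goodCount_mul_le_sum_cubeSlice {d n : ℕ} (H : Set (Fin d → Bool))
    (S : Set (Fin (n + 1) → Bool)) :
    goodCount H (n + 1) S * (n + 1 - d) ≤
      ∑ jb : Fin (n + 1) × Bool, goodCount H n (cubeSlice S jb.1 jb.2) := by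
  have hcard : ∀ P ∈ goodSubcubes H (n + 1) S, #P.1 = d := fun P hP =>
    (mem_filter.mp hP).2.1
  let s := (goodSubcubes H (n + 1) S).sigma fun P => P.1ᶜ
  have hs : #s = goodCount H (n + 1) S * (n + 1 - d) := by
    rw [card_sigma, sum_congr rfl fun P hP => by rw [card_compl, Fintype.card_fin, hcard P hP],
      sum_const, smul_eq_mul, goodCount_eq_card_goodSubcubes]
  rw [← hs]
  simp only [goodCount_eq_card_goodSubcubes, ← card_sigma]
  refine card_le_card_of_injOn
    (fun x => ⟨(x.2, x.1.2 x.2), (sliceCoords x.2 x.1.1, x.2.removeNth x.1.2)⟩) ?_ ?_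
  · rintro ⟨⟨D, f⟩, j⟩ hx
    obtain ⟨hP, hj⟩ := mem_sigma.mp hx
    obtain ⟨-, hD, hf, hH⟩ := mem_filter.mp hP
    replace hj : j ∉ D := by simpa using hj
    refine mem_sigma.mpr ⟨mem_univ _, mem_filter.mpr ⟨mem_univ _,
      (card_sliceCoords hj).trans hD, fun k hk => hf _ (mem_filter.mp hk).2, ?_⟩⟩
    rwa [← subcubeConfig_eq_cubeSlice S hj hD f]
  · rintro ⟨⟨D, f⟩, j⟩ hx ⟨⟨D', f'⟩, j'⟩ hx' h
    simp only [Sigma.mk.injEq, Prod.mk.injEq, heq_eq_eq] at h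
    obtain ⟨⟨rfl, hfj⟩, hD, hf⟩ := h
    have hj : j ∉ D := by simpa using (mem_sigma.mp hx).2
    have hj' : j ∉ D' := by simpa using (mem_sigma.mp hx').2
    rw [← map_sliceCoords hj, ← map_sliceCoords hj', hD,
      ← Fin.insertNth_self_removeNth j f, ← Fin.insertNth_self_removeNth j f', hfj, hf]

noncomputable def maxGoodCount {d : ℕ} (H : Set (Fin d → Bool)) (n : ℕ) : ℕ :=
  univ.sup fun S : Finset (Fin n → Bool) => goodCount H n S

theorem exDensity_eq_maxGoodCount_div {d : ℕ} (H : Set (Fin d → Bool)) (n : ℕ) :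
    exDensity H n = maxGoodCount H n / (n.choose d * 2 ^ (n - d)) := rfl

theorem goodCount_le_maxGoodCount {d n : ℕ} (H : Set (Fin d → Bool))
    (S : Set (Fin n → Bool)) : goodCount H n S ≤ maxGoodCount H n := by
  simpa [maxGoodCount] using
    le_sup (f := fun S : Finset (Fin n → Bool) => goodCount H n S) (mem_univ S.toFinset)

theorem exists_goodCount_eq_maxGoodCount {d : ℕ} (H : Set (Fin d → Bool)) (n : ℕ) :
    ∃ S : Set (Fin n → Bool), goodCount H n S = maxGoodCount H n := by
  obtain ⟨S, -, hS⟩ := exists_mem_eq_sup univ univ_nonempty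
    fun S : Finset (Fin n → Bool) => goodCount H n S
  exact ⟨S, hS.symm⟩

theorem maxGoodCount_succ_mul_le {d : ℕ} (H : Set (Fin d → Bool)) (n : ℕ) :
    maxGoodCount H (n + 1) * (n + 1 - d) ≤ 2 * (n + 1) * maxGoodCount H n := by
  obtain ⟨S, hS⟩ := exists_goodCount_eq_maxGoodCount H (n + 1)
  calc maxGoodCount H (n + 1) * (n + 1 - d)
      ≤ ∑ jb : Fin (n + 1) × Bool, goodCount H n (cubeSlice S jb.1 jb.2) :=
        hS ▸ goodCount_mul_le_sum_cubeSlice H S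
    _ ≤ ∑ _jb : Fin (n + 1) × Bool, maxGoodCount H n :=
        sum_le_sum fun _ _ => goodCount_le_maxGoodCount H _
    _ = 2 * (n + 1) * maxGoodCount H n := by simp [mul_comm]

theorem exDensity_succ_le {d n : ℕ} (H : Set (Fin d → Bool)) (hdn : d ≤ n) :
    exDensity H (n + 1) ≤ exDensity H n := by
  have key : maxGoodCount H (n + 1) * (n.choose d * 2 ^ (n - d)) ≤
      maxGoodCount H n * ((n + 1).choose d * 2 ^ (n + 1 - d)) := by
    refine Nat.le_of_mul_le_mul_right ?_ n.succ_pos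
    calc maxGoodCount H (n + 1) * (n.choose d * 2 ^ (n - d)) * (n + 1)
        = maxGoodCount H (n + 1) * (n.choose d * (n + 1)) * 2 ^ (n - d) := by ring
      _ = maxGoodCount H (n + 1) * (n + 1 - d) * ((n + 1).choose d * 2 ^ (n - d)) := by
          rw [Nat.choose_mul_succ_eq]; ring
      _ ≤ 2 * (n + 1) * maxGoodCount H n * ((n + 1).choose d * 2 ^ (n - d)) :=
          Nat.mul_le_mul_right _ (maxGoodCount_succ_mul_le H n)
      _ = maxGoodCount H n * ((n + 1).choose d * 2 ^ (n + 1 - d)) * (n + 1) := by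
          rw [Nat.sub_add_comm hdn, pow_succ]; ring
  have hC : ∀ m, d ≤ m → (0 : ℝ) < m.choose d * 2 ^ (m - d) := fun m hm => by
    have := Nat.choose_pos hm; positivity
  rw [exDensity_eq_maxGoodCount_div, exDensity_eq_maxGoodCount_div,
    div_le_div_iff₀ (hC _ (hdn.trans n.le_succ)) (hC _ hdn)]
  exact_mod_cast key

/-! ### The limit -/

open Filter Topology

theorem exists_tendsto_exDensity {d : ℕ} (H : Set (Fin d → Bool)) :
    ∃ L, Tendsto (exDensity H) atTop (𝓝 L) := by
  have hanti : Antitone fun k => exDensity H (k + d) :=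
    antitone_nat_of_succ_le fun k => by
      rw [add_right_comm]; exact exDensity_succ_le H (Nat.le_add_left d k)
  have hbdd : BddBelow (Set.range fun k => exDensity H (k + d)) :=
    ⟨0, by rintro _ ⟨k, rfl⟩; unfold exDensity; positivity⟩
  exact ⟨_, (tendsto_add_atTop_iff_nat d).mp (tendsto_atTop_ciInf hanti hbdd)⟩

theorem exDensity_perfectPath_ge {d n : ℕ} (hdn : d ≤ n) :
    (d + 1) * ((n / (d + 1) : ℕ) : ℝ) ^ d / n.choose d ≤ exDensity (perfectPath d) n := by
  have h := (goodCount_blowUp_ge d n).trans (goodCount_le_maxGoodCount _ _)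
  have hC : (0 : ℝ) < n.choose d := by exact_mod_cast Nat.choose_pos hdn
  calc (d + 1) * ((n / (d + 1) : ℕ) : ℝ) ^ d / n.choose d
      = (d + 1) * ((n / (d + 1) : ℕ) : ℝ) ^ d * 2 ^ (n - d) / (n.choose d * 2 ^ (n - d)) := by
        field_simp
    _ ≤ maxGoodCount (perfectPath d) n / (n.choose d * 2 ^ (n - d)) := by
        gcongr; exact_mod_cast h
    _ = exDensity (perfectPath d) n := (exDensity_eq_maxGoodCount_div _ n).symm

theorem factorial_div_mul_one_sub_pow_le {d n : ℕ} (hdn : d < n) :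
    d.factorial / ((d : ℝ) + 1) ^ (d - 1) * (1 - d / n) ^ d ≤
      (d + 1) * ((n / (d + 1) : ℕ) : ℝ) ^ d / n.choose d := by
  have hn : (0 : ℝ) < n := by exact_mod_cast (Nat.zero_le d).trans_lt hdn
  have hdn' : (d : ℝ) ≤ n := by exact_mod_cast hdn.le
  have hC : (0 : ℝ) < n.choose d := by exact_mod_cast Nat.choose_pos hdn.le
  have hq : ((n : ℝ) - d) / (d + 1) ≤ (n / (d + 1) : ℕ) := by
    have := Nat.lt_div_mul_add (a := n) (Nat.succ_pos d)
    rw [div_le_iff₀ (by positivity)]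
    have : (n : ℝ) + 1 ≤ (n / (d + 1) : ℕ) * (d + 1) + (d + 1) := by exact_mod_cast this
    linarith
  have hchoose : (n.choose d : ℝ) * d.factorial ≤ (n : ℝ) ^ d :=
    (le_div_iff₀ (by positivity)).mp (Nat.choose_le_pow_div d n)
  have hpow : ((d : ℝ) + 1) ^ (d - 1) * (d + 1) = (d + 1) ^ d := by
    cases d <;> simp [pow_succ]
  calc d.factorial / ((d : ℝ) + 1) ^ (d - 1) * (1 - d / n) ^ d
      = (d + 1) * (((n : ℝ) - d) / (d + 1)) ^ d * d.factorial / n ^ d := by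
        rw [one_sub_div hn.ne', div_pow, div_pow, ← hpow]; field_simp
    _ ≤ (d + 1) * ((n / (d + 1) : ℕ) : ℝ) ^ d * d.factorial / n ^ d := by
        gcongr
    _ ≤ (d + 1) * ((n / (d + 1) : ℕ) : ℝ) ^ d / n.choose d := by
        rw [div_le_div_iff₀ (by positivity) hC, mul_assoc _ (d.factorial : ℝ)]
        gcongr
        linarith

theorem tendsto_mul_one_sub_div_pow (c : ℝ) (d : ℕ) :
    Tendsto (fun n : ℕ => c * (1 - d / n) ^ d) atTop (𝓝 c) := by
  simpa using ((tendsto_const_div_atTop_nhds_zero_nat (d : ℝ)).const_sub 1).pow d |>.const_mul c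

theorem stmt17_general {d : ℕ} :
    ∃ L : ℝ, Filter.Tendsto (fun n => exDensity (perfectPath d) n) Filter.atTop (nhds L) ∧
      (d.factorial : ℝ) / ((d : ℝ) + 1) ^ (d - 1) ≤ L := by
  obtain ⟨L, hL⟩ := exists_tendsto_exDensity (perfectPath d)
  refine ⟨L, hL, le_of_tendsto_of_tendsto (tendsto_mul_one_sub_div_pow _ d) hL ?_⟩
  filter_upwards [eventually_gt_atTop d] with n hn
  exact (factorial_div_mul_one_sub_pow_le hn).trans (exDensity_perfectPath_ge hn.le)

/-- for every positive integer `d`, the `d`-cube density of the perfect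
path `P_{d+1}` exists and satisfies `π(P_{d+1},d) ≥ d!/(d+1)^{d−1}`. -/
theorem stmt17 {d : ℕ} (hd : 0 < d) :
    ∃ L : ℝ, Filter.Tendsto (fun n => exDensity (perfectPath d) n) Filter.atTop (nhds L) ∧
      (d.factorial : ℝ) / ((d : ℝ) + 1) ^ (d - 1) ≤ L :=
  stmt17_general
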